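/- arXiv:1504.03009 — 2 statements merged into one kernel-verified Lean document; each statement's English description precedes it below -/
import Mathlib

section
/- Let Σ₁ = (σ² + γ)P₁ + σ²(I - P₁) and Σⱼ = (σ² + γ)Pⱼ + σ²(I - Pⱼ) where P₁, Pⱼ are rank-r orthogonal projectors on R^l, σ > 0, γ > 0. Then tr(Σ₁⁻¹(Σⱼ - Σ₁)) = γ²/(2(σ² + γ)σ²) · ‖P₁ - Pⱼ‖_F². -/
open Matrix

/-- Squared Frobenius norm of a real matrix. -/
noncomputable def frobSq {l : ℕ} (M : Matrix (Fin l) (Fin l) ℝ) : ℝ :=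
  Matrix.trace (Mᵀ * M)

/-- Trace of an idempotent real matrix equals its rank. -/
lemma trace_idem_eq_rank {l : ℕ} (P : Matrix (Fin l) (Fin l) ℝ) (h : P * P = P) :
    P.trace = (P.rank : ℝ) := by
  have hf : P.mulVecLin ∘ₗ P.mulVecLin = P.mulVecLin := by
    rw [← Matrix.mulVecLin_mul, h]
  have hproj : LinearMap.IsProj (LinearMap.range P.mulVecLin) P.mulVecLin := by
    refine ⟨fun x => LinearMap.mem_range_self _ x, ?_⟩
    rintro x ⟨y, rfl⟩
    exact congrFun (congrArg DFunLike.coe hf) y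
  have := hproj.trace
  rw [LinearMap.trace_eq_matrix_trace ℝ (Pi.basisFun ℝ (Fin l))] at this
  rw [show LinearMap.toMatrix (Pi.basisFun ℝ (Fin l)) (Pi.basisFun ℝ (Fin l)) P.mulVecLin = P
    from ?_] at this
  · exact this
  · rw [LinearMap.toMatrix_eq_toMatrix', ← Matrix.toLin'_apply' P, LinearMap.toMatrix'_toLin']

/-- For `Σ₁ = (σ² + γ)P₁ + σ²(I - P₁)` and `Σⱼ = (σ² + γ)Pⱼ + σ²(I - Pⱼ)` with `P₁, Pⱼ`
rank-`r` orthogonal projectors, `σ, γ > 0`, and `Σ₁⁻¹ = (σ²+γ)⁻¹ P₁ + σ⁻² (I - P₁)`,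
one has `tr (Σ₁⁻¹ (Σⱼ - Σ₁)) = γ²/(2(σ²+γ)σ²) ‖P₁ - Pⱼ‖_F²`. -/
theorem trace_inv_mul_diff_eq {l r : ℕ} (sig gam : ℝ) (hsig : 0 < sig) (hgam : 0 < gam)
    (P1 Pj : Matrix (Fin l) (Fin l) ℝ)
    (hP1symm : P1ᵀ = P1) (hP1idem : P1 * P1 = P1) (hP1rank : P1.rank = r)
    (hPjsymm : Pjᵀ = Pj) (hPjidem : Pj * Pj = Pj) (hPjrank : Pj.rank = r) :
    Matrix.trace
      (((sig ^ 2 + gam)⁻¹ • P1 + (sig ^ 2)⁻¹ • ((1 : Matrix (Fin l) (Fin l) ℝ) - P1)) *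
        (((sig ^ 2 + gam) • Pj + sig ^ 2 • ((1 : Matrix (Fin l) (Fin l) ℝ) - Pj)) -
         ((sig ^ 2 + gam) • P1 + sig ^ 2 • ((1 : Matrix (Fin l) (Fin l) ℝ) - P1)))) =
      gam ^ 2 / (2 * (sig ^ 2 + gam) * sig ^ 2) * frobSq (P1 - Pj) := by
  have hr1 : P1.trace = (r : ℝ) := by rw [trace_idem_eq_rank P1 hP1idem, hP1rank]
  have hrj : Pj.trace = (r : ℝ) := by rw [trace_idem_eq_rank Pj hPjidem, hPjrank]
  have ha : (sig ^ 2 + gam) ≠ 0 := by positivity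
  have hb : (sig ^ 2 : ℝ) ≠ 0 := by positivity
  have hdiff : (((sig ^ 2 + gam) • Pj + sig ^ 2 • ((1 : Matrix (Fin l) (Fin l) ℝ) - Pj)) -
      ((sig ^ 2 + gam) • P1 + sig ^ 2 • ((1 : Matrix (Fin l) (Fin l) ℝ) - P1))) =
      gam • (Pj - P1) := by
    simp only [smul_sub, smul_add]
    module
  rw [hdiff]
  have hfrob : frobSq (P1 - Pj) =
      P1.trace + Pj.trace - 2 * (P1 * Pj).trace := by
    simp only [frobSq, transpose_sub, hP1symm, hPjsymm, sub_mul, mul_sub, trace_sub,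
      hP1idem, hPjidem, Matrix.trace_mul_comm Pj P1]
    ring
  rw [hfrob]
  simp only [mul_smul_comm, trace_smul, add_mul, sub_mul, mul_sub, mul_one, one_mul,
    smul_mul_assoc, trace_add, trace_sub, smul_eq_mul, hP1idem,
    Matrix.trace_mul_comm Pj P1]
  rw [hr1, hrj]
  field_simp
  ring
end

section
/- Let s > 0 and let φ₁(t) = C₁(∑_{k=1}^{l} e_k(t)/k^{s+1} + ∑_{k=l+1}^{2l} e_k(t)/k^{s+1/2}) where {e_k} is an orthonormal basis of L²[0,1] and C₁ = C₁(s) normalizes ‖φ₁‖₂ = 1. Then: (i) ‖φ₁‖_{s,2}² = ∑_k k^{2s}⟨φ₁,e_k⟩² ≤ c' for a constant c' depending only on s; (ii) the projection φ₁^{(l)} onto span{e₁,…,e_l} satisfies ‖φ₁ - φ₁^{(l)}‖₂² ≥ c·l^{-2s} for a constant c > 0 depending only on s. -/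
/-!
Weighting the squared coefficients by `(k+1)^{2s}` turns them into `C₁²/(k+1)²` for `k < l`
and `C₁²/(k+1)` for `l ≤ k < 2l`, so the weighted sum is at most `3C₁²`, and its tail part is
at least `C₁²/2`. The normalisation gives `C₁² ≤ 1` (the first coefficient is `C₁`) and
`C₁² ≥ 1/3` (the weights are `≥ 1`). On the tail the weights are at most `(2l)^{2s}`, which
turns the lower bound for the weighted tail into `≥ (2l)^{-2s}/6` for the plain one.
-/

open Finset

theorem sum_range_inv_succ_sq_le_two (n : ℕ) : ∑ k ∈ range n, (((k : ℝ) + 1) ^ 2)⁻¹ ≤ 2 := by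
  have h := sum_Ioo_inv_sq_le (α := ℝ) 0 (n + 1)
  rw [← Finset.Ico_add_one_left_eq_Ioo, sum_Ico_eq_sum_range] at h
  simpa [add_comm] using h

theorem rpow_two_mul_mul_div_rpow_add_sq {x : ℝ} (hx : 0 < x) (t a C : ℝ) :
    x ^ (2 * t) * (C / x ^ (t + a)) ^ 2 = C ^ 2 / x ^ (2 * a) := by
  rw [div_pow, ← Real.rpow_two (x ^ (t + a)), ← Real.rpow_mul hx.le, mul_div_assoc',
    div_eq_div_iff (by positivity) (by positivity), mul_right_comm, ← Real.rpow_add hx]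
  ring_nf

section ShiftedWeights

variable {S : Finset ℕ} {f : ℕ → ℝ} {p : ℝ}

theorem sum_le_sum_succ_rpow_mul (hp : 0 ≤ p) (hf : ∀ k ∈ S, 0 ≤ f k) :
    ∑ k ∈ S, f k ≤ ∑ k ∈ S, ((k : ℝ) + 1) ^ p * f k :=
  sum_le_sum fun k hk => le_mul_of_one_le_left (hf k hk)
    (Real.one_le_rpow (by linarith [k.cast_nonneg (α := ℝ)]) hp)

theorem sum_succ_rpow_mul_le_rpow_mul_sum {N : ℝ} (hp : 0 ≤ p) (hf : ∀ k ∈ S, 0 ≤ f k)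
    (hN : ∀ k ∈ S, (k : ℝ) + 1 ≤ N) :
    ∑ k ∈ S, ((k : ℝ) + 1) ^ p * f k ≤ N ^ p * ∑ k ∈ S, f k := by
  rw [mul_sum]
  exact sum_le_sum fun k hk => mul_le_mul_of_nonneg_right
    (Real.rpow_le_rpow (by positivity) (hN k hk) hp) (hf k hk)

end ShiftedWeights

/-- The coefficient of `e_{k+1}` in `φ₁`, with `C = C₁`. -/
noncomputable def testCoef (s : ℝ) (l : ℕ) (C : ℝ) (k : ℕ) : ℝ :=
  if k < l then C / ((k : ℝ) + 1) ^ (s + 1)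
  else if k < 2 * l then C / ((k : ℝ) + 1) ^ (s + 1 / 2)
  else 0

namespace testCoef

variable {s : ℝ} {l : ℕ} {C : ℝ} {k : ℕ}

theorem zero (hl : 0 < l) : testCoef s l C 0 = C := by
  simp [testCoef, hl]

theorem rpow_mul_sq_of_lt (hk : k < l) :
    ((k : ℝ) + 1) ^ (2 * s) * testCoef s l C k ^ 2 = C ^ 2 / ((k : ℝ) + 1) ^ 2 := by
  rw [testCoef, if_pos hk, rpow_two_mul_mul_div_rpow_add_sq (by positivity), mul_one,
    Real.rpow_two]

theorem rpow_mul_sq_of_mem_Ico (hk : k ∈ Ico l (2 * l)) :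
    ((k : ℝ) + 1) ^ (2 * s) * testCoef s l C k ^ 2 = C ^ 2 / ((k : ℝ) + 1) := by
  obtain ⟨hlk, hk2l⟩ := mem_Ico.mp hk
  rw [testCoef, if_neg hlk.not_gt, if_pos hk2l, rpow_two_mul_mul_div_rpow_add_sq (by positivity)]
  norm_num

theorem sum_rpow_mul_sq_le (s : ℝ) (l : ℕ) (C : ℝ) :
    ∑ k ∈ range (2 * l), ((k : ℝ) + 1) ^ (2 * s) * testCoef s l C k ^ 2 ≤ 3 * C ^ 2 := by
  rw [← sum_range_add_sum_Ico _ (by omega : l ≤ 2 * l),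
    sum_congr rfl fun k hk => rpow_mul_sq_of_lt (mem_range.mp hk),
    sum_congr rfl fun k hk => rpow_mul_sq_of_mem_Ico hk]
  have hlow : ∑ k ∈ range l, C ^ 2 / ((k : ℝ) + 1) ^ 2 ≤ 2 * C ^ 2 := by
    simpa only [div_eq_mul_inv, ← mul_sum, mul_comm (2 : ℝ)] using
      mul_le_mul_of_nonneg_left (sum_range_inv_succ_sq_le_two l) (sq_nonneg C)
  have hhigh : ∑ k ∈ Ico l (2 * l), C ^ 2 / ((k : ℝ) + 1) ≤ C ^ 2 := by
    calc ∑ k ∈ Ico l (2 * l), C ^ 2 / ((k : ℝ) + 1)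
        ≤ #(Ico l (2 * l)) • (C ^ 2 / ((l : ℝ) + 1)) :=
          sum_le_card_nsmul _ _ _ fun k hk => by
            gcongr; exact_mod_cast (mem_Ico.mp hk).1
      _ = (l : ℝ) / (l + 1) * C ^ 2 := by
          rw [Nat.card_Ico, nsmul_eq_mul, show 2 * l - l = l by omega]; ring
      _ ≤ C ^ 2 :=
          mul_le_of_le_one_left (sq_nonneg C) (div_le_one_of_le₀ (by linarith) (by positivity))
  linarith

theorem le_sum_Ico_rpow_mul_sq (hl : 0 < l) :
    C ^ 2 / 2 ≤ ∑ k ∈ Ico l (2 * l), ((k : ℝ) + 1) ^ (2 * s) * testCoef s l C k ^ 2 := by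
  rw [sum_congr rfl fun k hk => rpow_mul_sq_of_mem_Ico hk]
  calc C ^ 2 / 2 = #(Ico l (2 * l)) • (C ^ 2 / (2 * l)) := by
        rw [Nat.card_Ico, nsmul_eq_mul, show 2 * l - l = l by omega]; field_simp
    _ ≤ ∑ k ∈ Ico l (2 * l), C ^ 2 / ((k : ℝ) + 1) :=
        card_nsmul_le_sum _ _ _ fun k hk => by
          gcongr; exact_mod_cast (mem_Ico.mp hk).2

end testCoef

/-- Properties of the test function `φ₁ = C₁(∑_{k=1}^l e_k/k^{s+1} + ∑_{k=l+1}^{2l}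
e_k/k^{s+1/2})` (here written via its `0`-based coefficient sequence `c`):
(i) `‖φ₁‖_{s,2}² ≤ c'` for a constant `c'` depending only on `s`, and
(ii) `‖φ₁ - φ₁^{(l)}‖₂² ≥ c l^{-2s}` for a constant `c > 0` depending only on `s`. -/
theorem test_function_properties (s : ℝ) (hs : 0 < s) :
    ∃ c' c : ℝ, 0 < c' ∧ 0 < c ∧
      ∀ (l : ℕ), 1 ≤ l → ∀ C₁ : ℝ, 0 < C₁ →
        ∀ coef : ℕ → ℝ,
          (∀ k, coef k =
            if k < l then C₁ / ((k : ℝ) + 1) ^ (s + 1)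
            else if k < 2 * l then C₁ / ((k : ℝ) + 1) ^ (s + 1 / 2)
            else 0) →
          (∑ k ∈ Finset.range (2 * l), (coef k) ^ 2 = 1) →
          (∑ k ∈ Finset.range (2 * l), ((k : ℝ) + 1) ^ (2 * s) * (coef k) ^ 2 ≤ c') ∧
          (∑ k ∈ Finset.Ico l (2 * l), (coef k) ^ 2 ≥ c * (l : ℝ) ^ (-(2 * s))) := by
  refine ⟨3, 2 ^ (-(2 * s)) / 6, by norm_num, by positivity, ?_⟩
  rintro l hl C₁ - coef hcoef hnorm
  obtain rfl : coef = testCoef s l C₁ := funext hcoef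
  have h2s : 0 ≤ 2 * s := by linarith
  have hsq : ∀ k ∈ range (2 * l), 0 ≤ testCoef s l C₁ k ^ 2 := fun k _ => sq_nonneg _
  have hC_le : C₁ ^ 2 ≤ 1 := by
    simpa only [testCoef.zero hl, hnorm] using
      single_le_sum hsq (mem_range.mpr (by omega : 0 < 2 * l))
  have hC_ge : 1 ≤ 3 * C₁ ^ 2 := hnorm ▸
    (sum_le_sum_succ_rpow_mul h2s hsq).trans (testCoef.sum_rpow_mul_sq_le s l C₁)
  refine ⟨(testCoef.sum_rpow_mul_sq_le s l C₁).trans (by linarith), ?_⟩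
  have hl0 : (0 : ℝ) < l := by exact_mod_cast hl
  calc 2 ^ (-(2 * s)) / 6 * (l : ℝ) ^ (-(2 * s))
      = ((2 * l : ℝ) ^ (2 * s))⁻¹ * (1 / 3 / 2) := by
        rw [Real.mul_rpow (by norm_num) hl0.le, Real.rpow_neg (by norm_num),
          Real.rpow_neg hl0.le]
        ring
    _ ≤ ((2 * l : ℝ) ^ (2 * s))⁻¹ *
          ∑ k ∈ Ico l (2 * l), ((k : ℝ) + 1) ^ (2 * s) * testCoef s l C₁ k ^ 2 := by
        gcongr
        exact le_trans (by linarith) (testCoef.le_sum_Ico_rpow_mul_sq hl)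
    _ ≤ ∑ k ∈ Ico l (2 * l), testCoef s l C₁ k ^ 2 := by
        rw [inv_mul_le_iff₀ (by positivity)]
        refine sum_succ_rpow_mul_le_rpow_mul_sum h2s (fun k _ => sq_nonneg _) fun k hk => ?_
        exact_mod_cast (mem_Ico.mp hk).2
end
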